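/- arXiv:1109.5261 — 2 statements merged into one kernel-verified Lean document; each statement's English description precedes it below -/
import Mathlib

section
/- Let 0 < l_1, 0 < l_2, l_1 + l_2 < 1 and fix y_1, y_2 ∈ ℝ. Define v_a = (1 + y_1/(√a l_1))^{l_1} (1 + y_2/(√a l_2))^{l_2} (1 - (y_1+y_2)/(√a (1-l_1-l_2)))^{1-l_1-l_2}. Then lim_{a→∞} a·ln(v_a) = -[l_2(1-l_2)y_1² + 2 l_1 l_2 y_1 y_2 + l_1(1-l_1)y_2²] / (2 l_1 l_2 (1-l_1-l_2)). -/
open Filter Real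

/-
Put `l₃ = 1 - l₁ - l₂` and `d₁ = y₁ / l₁`, `d₂ = y₂ / l₂`, `d₃ = -(y₁ + y₂) / l₃`, so that
`a · ln v_a = ∑ lᵢ · a · ln (1 + dᵢ / √a)`. The expansion
`a · ln (1 + d / √a) = √a · d - d² / 2 + O(1 / √a)` reduces the limit to `-∑ lᵢ dᵢ² / 2`,
because the divergent terms `√a · ∑ lᵢ dᵢ` vanish identically: `∑ lᵢ dᵢ = 0`.
-/

theorem Real.abs_log_one_add_sub_add_sq_le {x : ℝ} (hx : |x| ≤ 1 / 2) :
    |log (1 + x) - x + x ^ 2 / 2| ≤ 2 * |x| ^ 3 := by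
  have h := abs_log_sub_add_sum_range_le (x := -x) (by rw [abs_neg]; linarith) 2
  rw [abs_neg] at h
  calc |log (1 + x) - x + x ^ 2 / 2|
      = |(∑ i ∈ Finset.range 2, (-x) ^ (i + 1) / (i + 1)) + log (1 - -x)| := by
        simp only [Finset.sum_range_succ, Finset.sum_range_zero, sub_neg_eq_add]
        congr 1; push_cast; ring
    _ ≤ |x| ^ 3 / (1 - |x|) := h
    _ ≤ 2 * |x| ^ 3 := by
        rw [div_le_iff₀ (by linarith)]
        nlinarith [pow_nonneg (abs_nonneg x) 3]

theorem tendsto_sq_mul_log_one_add_div_sub (c : ℝ) :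
    Tendsto (fun t : ℝ => t ^ 2 * log (1 + c / t) - t * c) atTop (nhds (-(c ^ 2) / 2)) := by
  refine tendsto_sub_nhds_zero_iff.1 ?_
  refine squeeze_zero_norm' ?_ (tendsto_const_nhds (x := 2 * |c| ^ 3).div_atTop tendsto_id)
  filter_upwards [eventually_gt_atTop 0, eventually_ge_atTop (2 * |c|)] with t ht hct
  have hx : |c / t| ≤ 1 / 2 := by
    rw [abs_div, abs_of_pos ht, div_le_iff₀ ht]; linarith
  calc ‖t ^ 2 * log (1 + c / t) - t * c - (-(c ^ 2) / 2)‖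
      = |t ^ 2 * (log (1 + c / t) - c / t + (c / t) ^ 2 / 2)| := by
        rw [Real.norm_eq_abs]; congr 1; field_simp; ring
    _ = t ^ 2 * |log (1 + c / t) - c / t + (c / t) ^ 2 / 2| := by
        rw [abs_mul, abs_of_pos (pow_pos ht 2)]
    _ ≤ t ^ 2 * (2 * |c / t| ^ 3) := by gcongr; exact Real.abs_log_one_add_sub_add_sq_le hx
    _ = 2 * |c| ^ 3 / t := by
        rw [abs_div, abs_of_pos ht]; field_simp

theorem tendsto_mul_log_one_add_div_sqrt_sub (c : ℝ) :
    Tendsto (fun a : ℝ => a * log (1 + c / √a) - √a * c) atTop (nhds (-(c ^ 2) / 2)) := by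
  refine ((tendsto_sq_mul_log_one_add_div_sub c).comp tendsto_sqrt_atTop).congr' ?_
  filter_upwards [eventually_ge_atTop 0] with a ha
  simp only [Function.comp_apply, sq_sqrt ha]

theorem tendsto_mul_log_prod_one_add_div_sqrt_rpow {ι : Type*} (s : Finset ι) (w c : ι → ℝ)
    (hwc : ∑ i ∈ s, w i * c i = 0) :
    Tendsto (fun a : ℝ => a * log (∏ i ∈ s, (1 + c i / √a) ^ w i)) atTop
      (nhds (∑ i ∈ s, w i * (-(c i ^ 2) / 2))) := by
  have hpos : ∀ᶠ a in atTop, ∀ i ∈ s, 0 < 1 + c i / √a := by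
    refine (s.eventually_all).2 fun i _ => ?_
    have : Tendsto (fun a : ℝ => 1 + c i / √a) atTop (nhds (1 + 0)) :=
      (tendsto_const_nhds.div_atTop tendsto_sqrt_atTop).const_add 1
    exact this.eventually (lt_mem_nhds (by norm_num))
  refine (tendsto_finsetSum s fun i _ =>
    (tendsto_mul_log_one_add_div_sqrt_sub (c i)).const_mul (w i)).congr' ?_
  filter_upwards [hpos] with a ha
  rw [log_prod fun i hi => (rpow_pos_of_pos (ha i hi) _).ne', Finset.mul_sum]
  calc ∑ i ∈ s, w i * (a * log (1 + c i / √a) - √a * c i)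
      = ∑ i ∈ s, w i * (a * log (1 + c i / √a)) - √a * ∑ i ∈ s, w i * c i := by
        rw [Finset.mul_sum, ← Finset.sum_sub_distrib]; congr 1 with i; ring
    _ = ∑ i ∈ s, a * log ((1 + c i / √a) ^ w i) := by
        rw [hwc, mul_zero, sub_zero]
        refine Finset.sum_congr rfl fun i hi => ?_
        rw [log_rpow (ha i hi)]; ring

/-- The key exponent computation: `a · ln v_a` converges to the negative quadratic form. -/
theorem dirichlet_exponent_limit (l₁ l₂ : ℝ) (hl₁ : 0 < l₁) (hl₂ : 0 < l₂)
    (hl : l₁ + l₂ < 1) (y₁ y₂ : ℝ) :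
    Tendsto (fun a : ℝ =>
        a * Real.log ((1 + y₁ / (Real.sqrt a * l₁)) ^ l₁ *
          (1 + y₂ / (Real.sqrt a * l₂)) ^ l₂ *
          (1 - (y₁ + y₂) / (Real.sqrt a * (1 - l₁ - l₂))) ^ (1 - l₁ - l₂)))
      atTop
      (nhds (-(l₂ * (1 - l₂) * y₁ ^ 2 + 2 * l₁ * l₂ * y₁ * y₂ + l₁ * (1 - l₁) * y₂ ^ 2) /
        (2 * l₁ * l₂ * (1 - l₁ - l₂)))) := by
  have hl₃ : 1 - l₁ - l₂ ≠ 0 := by linarith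
  let w : Fin 3 → ℝ := ![l₁, l₂, 1 - l₁ - l₂]
  let c : Fin 3 → ℝ := ![y₁ / l₁, y₂ / l₂, -(y₁ + y₂) / (1 - l₁ - l₂)]
  have hwc : ∑ i, w i * c i = 0 := by
    simp only [Fin.sum_univ_three, w, c, Matrix.cons_val]
    field_simp
    ring
  have h := tendsto_mul_log_prod_one_add_div_sqrt_rpow Finset.univ w c hwc
  convert h using 3 with a
  · simp only [Fin.prod_univ_three, w, c, Matrix.cons_val]
    rw [div_mul_eq_div_div_swap, div_mul_eq_div_div_swap, div_mul_eq_div_div_swap, neg_div,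
      neg_div, ← sub_eq_add_neg]
  · simp only [Fin.sum_univ_three, w, c, Matrix.cons_val]
    field_simp
    ring
end

section
/- Let 0 < l < 1. The density f_a of D_a = √a (X_a - l), where X_a ~ Beta(al, a(1-l)), converges pointwise as a → ∞ to the density of the normal distribution N(0, l(1-l)); i.e., for every y ∈ ℝ, f_a(y) → (1/√(2π l(1-l))) exp(-y²/(2 l(1-l))). -/
/-!
Stirling's formula `Γ(x) = √(2π) x^(x - 1/2) e^(-x) e^(o(1))` holds for real `x → ∞`: along the
integers it is the classical statement about `n!`, and log-convexity of `Γ` pins `log Γ` between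
consecutive integers up to `O(1/n)`. Inserting it into the Beta density at `α = a l`,
`β = a (1 - l)`, all powers of `a` cancel and the logarithm of the density of `√a (X_a - l)` is
`-log √(2π l (1 - l)) + a l log (1 + y / (l √a)) + a (1 - l) log (1 - y / ((1 - l) √a)) + o(1)`.
By `log (1 + u) = u - u² / 2 + O(u³)` the terms `± y √a` cancel and what remains is
`-y² / (2 l) - y² / (2 (1 - l)) = -y² / (2 l (1 - l))`.
-/

open Filter Real Topology

noncomputable def betaPDF (α β x : ℝ) : ℝ :=
  if 0 < x ∧ x < 1 then
    Real.Gamma (α + β) / (Real.Gamma α * Real.Gamma β) * x ^ (α - 1) * (1 - x) ^ (β - 1)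
  else 0

noncomputable def stirlingRemainder (x : ℝ) : ℝ :=
  log (Gamma x) - ((x - 1 / 2) * log x - x)

lemma stirlingRemainder_natCast {n : ℕ} (hn : n ≠ 0) :
    stirlingRemainder n = log (Stirling.stirlingSeq n) + log 2 / 2 := by
  obtain ⟨k, rfl⟩ := Nat.exists_eq_succ_of_ne_zero hn
  have hk : (0 : ℝ) < k + 1 := by positivity
  rw [stirlingRemainder, Stirling.log_stirlingSeq_formula, Nat.cast_succ, Gamma_nat_eq_factorial,
    Nat.factorial_succ, Nat.cast_mul, Nat.cast_succ, Real.log_mul hk.ne' (by positivity),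
    Real.log_mul two_ne_zero hk.ne', Real.log_div hk.ne' (exp_ne_zero 1), log_exp]
  ring

lemma tendsto_stirlingRemainder_natCast :
    Tendsto (fun n : ℕ => stirlingRemainder n) atTop (𝓝 (log √(2 * π))) := by
  have hlim : log √(2 * π) = log √π + log 2 / 2 := by
    rw [sqrt_mul zero_le_two, Real.log_mul (by positivity) (by positivity),
      log_sqrt zero_le_two]
    ring
  rw [hlim]
  refine ((Stirling.tendsto_stirlingSeq_sqrt_pi.log (by positivity)).add_const _).congr' ?_
  filter_upwards [eventually_ne_atTop 0] with n hn
  exact (stirlingRemainder_natCast hn).symm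

lemma log_comp_Gamma_add_one {x : ℝ} (hx : 0 < x) :
    (log ∘ Gamma) (x + 1) = (log ∘ Gamma) x + log x := by
  rw [Function.comp_apply, Gamma_add_one hx.ne', Real.log_mul hx.ne' (Gamma_pos_of_pos hx).ne',
    add_comm, Function.comp_apply]

lemma abs_log_Gamma_natCast_add_sub_le {n : ℕ} (hn : 2 ≤ n) {t : ℝ} (ht₀ : 0 ≤ t)
    (ht₁ : t ≤ 1) : |log (Gamma (n + t)) - log (Gamma n) - t * log n| ≤ 1 / (n - 1) := by
  have hn₁ : (1 : ℝ) < n := by exact_mod_cast hn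
  rcases ht₀.eq_or_lt with rfl | ht₀
  · simpa using (one_div_pos.2 (sub_pos.2 hn₁)).le
  have hupper := BohrMollerup.f_add_nat_le (n := n) convexOn_log_Gamma log_comp_Gamma_add_one
    (by omega) ht₀ ht₁
  have hlower := BohrMollerup.f_add_nat_ge convexOn_log_Gamma log_comp_Gamma_add_one hn ht₀
  simp only [Function.comp_apply] at hupper hlower
  have hgap : log n - log (n - 1) ≤ 1 / (n - 1) := by
    rw [← Real.log_div (by positivity) (by linarith)]
    calc log (n / (n - 1)) ≤ n / (n - 1) - 1 := log_le_sub_one_of_pos (by bound)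
      _ = 1 / (n - 1) := by rw [div_sub_one (by linarith)]; ring
  have hgap₀ : 0 ≤ log n - log (n - 1) := sub_nonneg.2 (log_le_log (by linarith) (by linarith))
  rw [abs_le]
  constructor <;> nlinarith

lemma abs_sub_sub_mul_log_div_le {n x : ℝ} (hn : 1 ≤ n) (hnx : n ≤ x) (hxn : x ≤ n + 1) :
    |(x - n) - (x - 1 / 2) * log (x / n)| ≤ 1 / n := by
  have hn₀ : 0 < n := by linarith
  have hx₀ : 0 < x := by linarith
  have hupper : log (x / n) ≤ (x - n) / n := by
    have := log_le_sub_one_of_pos (div_pos hx₀ hn₀)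
    rwa [div_sub_one hn₀.ne'] at this
  have hlower : (x - n) / x ≤ log (x / n) := by
    have := one_sub_inv_le_log_of_pos (div_pos hx₀ hn₀)
    rwa [inv_div, one_sub_div hx₀.ne'] at this
  have hx : 0 ≤ x - 1 / 2 := by linarith
  have h₁ : (x - n) - (x - 1 / 2) * ((x - n) / x) ≤ 1 / n := by
    rw [show (x - n) - (x - 1 / 2) * ((x - n) / x) = (x - n) / (2 * x) by field_simp; ring,
      div_le_div_iff₀ (by positivity) hn₀]
    nlinarith
  have h₂ : -(1 / n) ≤ (x - n) - (x - 1 / 2) * ((x - n) / n) := by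
    rw [show (x - n) - (x - 1 / 2) * ((x - n) / n) = (x - n) * (1 / 2 - (x - n)) / n by
      field_simp; ring, ← neg_div, div_le_div_iff_of_pos_right hn₀]
    nlinarith
  rw [abs_le]
  constructor
  · nlinarith [mul_le_mul_of_nonneg_left hupper hx]
  · nlinarith [mul_le_mul_of_nonneg_left hlower hx]

lemma abs_stirlingRemainder_sub_floor_le {x : ℝ} (hx : 2 ≤ x) :
    |stirlingRemainder x - stirlingRemainder ⌊x⌋₊| ≤ 2 / (⌊x⌋₊ - 1) := by
  set n := ⌊x⌋₊
  have hn : 2 ≤ n := Nat.le_floor (by exact_mod_cast hx)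
  have hn₁ : (2 : ℝ) ≤ n := by exact_mod_cast hn
  have hnx : (n : ℝ) ≤ x := Nat.floor_le (by linarith)
  have hxn : x ≤ n + 1 := (Nat.lt_floor_add_one x).le
  have hGamma := abs_log_Gamma_natCast_add_sub_le hn (sub_nonneg.2 hnx) (by linarith)
  rw [add_sub_cancel] at hGamma
  have hlog := abs_sub_sub_mul_log_div_le (by linarith) hnx hxn
  have hsplit : stirlingRemainder x - stirlingRemainder n =
      (log (Gamma x) - log (Gamma n) - (x - n) * log n) +
        ((x - n) - (x - 1 / 2) * log (x / n)) := by
    rw [stirlingRemainder, stirlingRemainder, Real.log_div (by linarith) (by linarith)]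
    ring
  calc |stirlingRemainder x - stirlingRemainder n|
      ≤ 1 / (n - 1) + 1 / n := hsplit ▸ (abs_add_le _ _).trans (add_le_add hGamma hlog)
    _ ≤ 1 / (n - 1) + 1 / (n - 1) := by gcongr <;> linarith
    _ = 2 / (n - 1) := by ring

theorem tendsto_stirlingRemainder :
    Tendsto stirlingRemainder atTop (𝓝 (log √(2 * π))) := by
  have hfloor : Tendsto (fun x : ℝ => stirlingRemainder ⌊x⌋₊) atTop (𝓝 (log √(2 * π))) :=
    tendsto_stirlingRemainder_natCast.comp tendsto_nat_floor_atTop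
  have hbound : Tendsto (fun x : ℝ => 2 / ((⌊x⌋₊ : ℝ) - 1)) atTop (𝓝 0) :=
    tendsto_const_nhds.div_atTop (tendsto_atTop_add_const_right _ _
      (tendsto_natCast_atTop_atTop.comp tendsto_nat_floor_atTop))
  have hdiff : Tendsto (fun x => stirlingRemainder x - stirlingRemainder ⌊x⌋₊) atTop (𝓝 0) :=
    squeeze_zero_norm' ((eventually_ge_atTop 2).mono fun x hx =>
      abs_stirlingRemainder_sub_floor_le hx) hbound
  simpa using hdiff.add hfloor

lemma abs_log_one_add_sub_le {x : ℝ} (hx : |x| < 1) :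
    |log (1 + x) - x + x ^ 2 / 2| ≤ |x| ^ 3 / (1 - |x|) := by
  have h := abs_log_sub_add_sum_range_le (x := -x) (by rwa [abs_neg]) 2
  simp only [Finset.sum_range_succ, Finset.sum_range_zero, abs_neg, sub_neg_eq_add] at h
  convert h using 2
  ring

theorem tendsto_sq_mul_log_one_add_div_sub_mul (y : ℝ) :
    Tendsto (fun t : ℝ => t ^ 2 * log (1 + y / t) - y * t) atTop (𝓝 (-y ^ 2 / 2)) := by
  have hbound : Tendsto (fun t : ℝ => |y| ^ 3 / (t - |y|)) atTop (𝓝 0) :=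
    tendsto_const_nhds.div_atTop (tendsto_atTop_add_const_right _ _ tendsto_id)
  rw [← tendsto_sub_nhds_zero_iff]
  refine squeeze_zero_norm' ?_ hbound
  filter_upwards [eventually_gt_atTop |y|] with t ht
  have ht₀ : 0 < t := (abs_nonneg y).trans_lt ht
  have hyt : |y / t| < 1 := by
    rwa [abs_div, abs_of_pos ht₀, div_lt_one ht₀]
  have hsplit : t ^ 2 * log (1 + y / t) - y * t - (-y ^ 2 / 2) =
      t ^ 2 * (log (1 + y / t) - y / t + (y / t) ^ 2 / 2) := by
    field_simp
    ring
  calc ‖t ^ 2 * log (1 + y / t) - y * t - (-y ^ 2 / 2)‖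
      = t ^ 2 * |log (1 + y / t) - y / t + (y / t) ^ 2 / 2| := by
        rw [Real.norm_eq_abs, hsplit, abs_mul, abs_of_pos (pow_pos ht₀ 2)]
    _ ≤ t ^ 2 * (|y / t| ^ 3 / (1 - |y / t|)) := by gcongr; exact abs_log_one_add_sub_le hyt
    _ = |y| ^ 3 / (t - |y|) := by
        rw [abs_div, abs_of_pos ht₀]
        field_simp

lemma betaPDF_eq_exp {α β x : ℝ} (hα : 0 < α) (hβ : 0 < β) (hx₀ : 0 < x) (hx₁ : x < 1) :
    betaPDF α β x = exp (log (Gamma (α + β)) - log (Gamma α) - log (Gamma β)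
      + (α - 1) * log x + (β - 1) * log (1 - x)) := by
  rw [betaPDF, if_pos ⟨hx₀, hx₁⟩, exp_add, exp_add, exp_sub, exp_sub,
    exp_log (Gamma_pos_of_pos (add_pos hα hβ)), exp_log (Gamma_pos_of_pos hα),
    exp_log (Gamma_pos_of_pos hβ), mul_comm (α - 1), mul_comm (β - 1),
    rpow_def_of_pos hx₀, rpow_def_of_pos (sub_pos.2 hx₁)]
  ring

lemma one_div_mul_betaPDF_sq_mul_eq_exp {l m s y : ℝ} (hl : 0 < l) (hm : 0 < m)
    (hlm : l + m = 1) (hs : 0 < s) (hyl : 0 < 1 + y / (l * s)) (hym : 0 < 1 + -y / (m * s)) :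
    1 / s * betaPDF (s ^ 2 * l) (s ^ 2 * m) (y / s + l) =
      exp (stirlingRemainder (s ^ 2) - stirlingRemainder (s ^ 2 * l)
        - stirlingRemainder (s ^ 2 * m) - (log l + log m) / 2
        + ((l * s) ^ 2 * log (1 + y / (l * s)) - y * (l * s)) / l
        + ((m * s) ^ 2 * log (1 + -y / (m * s)) - -y * (m * s)) / m
        - log (1 + y / (l * s)) - log (1 + -y / (m * s))) := by
  have hx : y / s + l = l * (1 + y / (l * s)) := by field_simp; ring
  have hx' : 1 - (y / s + l) = m * (1 + -y / (m * s)) := by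
    rw [show 1 - (y / s + l) = m - y / s by linarith]; field_simp; ring
  have hs2 : s ^ 2 * l + s ^ 2 * m = s ^ 2 := by rw [← mul_add, hlm, mul_one]
  rw [betaPDF_eq_exp (by positivity) (by positivity) (hx ▸ by positivity)
    (by linarith [hx' ▸ mul_pos hm hym]), hx', hx, hs2, one_div, ← exp_log hs, ← exp_neg,
    ← exp_add, exp_log hs]
  congr 1
  simp only [stirlingRemainder]
  rw [Real.log_mul (by positivity) hl.ne', Real.log_mul (by positivity) hm.ne',
    Real.log_mul hl.ne' hyl.ne', Real.log_mul hm.ne' hym.ne', Real.log_pow]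
  field_simp
  linear_combination (2 * s ^ 2 - 4 * s ^ 2 * log s) * hlm

theorem tendsto_one_div_mul_betaPDF_sq_mul {l m : ℝ} (hl : 0 < l) (hm : 0 < m) (hlm : l + m = 1)
    (y : ℝ) :
    Tendsto (fun s : ℝ => 1 / s * betaPDF (s ^ 2 * l) (s ^ 2 * m) (y / s + l)) atTop
      (𝓝 (1 / √(2 * π * (l * m)) * exp (-y ^ 2 / (2 * (l * m))))) := by
  have hsq : Tendsto (fun s : ℝ => s ^ 2) atTop atTop := tendsto_pow_atTop two_ne_zero
  have hR := ((tendsto_stirlingRemainder.comp hsq).sub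
    (tendsto_stirlingRemainder.comp (hsq.atTop_mul_const hl))).sub
    (tendsto_stirlingRemainder.comp (hsq.atTop_mul_const hm))
  have hT {c : ℝ} (hc : 0 < c) (z : ℝ) :=
    ((tendsto_sq_mul_log_one_add_div_sub_mul z).comp (tendsto_id.const_mul_atTop hc)).div_const c
  have hone {c : ℝ} (hc : 0 < c) (z : ℝ) : Tendsto (fun s : ℝ => 1 + z / (c * s)) atTop (𝓝 1) := by
    simpa using tendsto_const_nhds.add
      (tendsto_const_nhds.div_atTop (tendsto_id.const_mul_atTop hc))
  have hexp := (((((hR.sub_const ((log l + log m) / 2)).add (hT hl y)).add (hT hm (-y))).sub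
    ((hone hl y).log one_ne_zero)).sub ((hone hm (-y)).log one_ne_zero)).rexp
  convert hexp.congr' ?_ using 2
  · have hlm₀ : 0 < l * m := mul_pos hl hm
    rw [one_div, ← exp_log (by positivity : 0 < √(2 * π * (l * m))), ← exp_neg, ← exp_add,
      log_sqrt (by positivity), Real.log_mul (by positivity) hlm₀.ne', Real.log_mul hl.ne' hm.ne',
      log_sqrt (by positivity), log_one]
    congr 1
    field_simp
    linear_combination y ^ 2 * hlm
  · filter_upwards [eventually_gt_atTop 0, (hone hl y).eventually (eventually_gt_nhds one_pos),
      (hone hm (-y)).eventually (eventually_gt_nhds one_pos)] with s hs hyl hym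
    exact (one_div_mul_betaPDF_sq_mul_eq_exp hl hm hlm hs hyl hym).symm

/-- The density of `√a (X_a - l)` where `X_a ~ Beta(al, a(1-l))` converges pointwise to the
density of `N(0, l(1-l))`. -/
theorem beta_scaled_density_tendsto_gaussian (l : ℝ) (hl₀ : 0 < l) (hl₁ : l < 1) (y : ℝ) :
    Tendsto (fun a : ℝ =>
        (1 / Real.sqrt a) * betaPDF (a * l) (a * (1 - l)) (y / Real.sqrt a + l))
      atTop
      (nhds ((1 / Real.sqrt (2 * Real.pi * (l * (1 - l)))) *
        Real.exp (-y ^ 2 / (2 * (l * (1 - l)))))) := by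
  refine ((tendsto_one_div_mul_betaPDF_sq_mul hl₀ (sub_pos.2 hl₁) (add_sub_cancel l 1) y).comp
    tendsto_sqrt_atTop).congr' ?_
  filter_upwards [eventually_ge_atTop 0] with a ha
  simp only [Function.comp_apply, sq_sqrt ha]
end
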